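/- arXiv:cs/0205030 — 2 statements merged into one kernel-verified Lean document; each statement's English description precedes it below -/
import Mathlib

section
/- Let A ∈ ℝ_+^{m×n} and a ∈ ℝ_+^m, and define A' by A'_{ij} = min(A_{ij}, a_i). Then for every x ∈ ℤ_+^n, Ax ≥ a if and only if A'x ≥ a. -/
/-- Capping the entries of `A` at the right-hand sides `a` preserves the set of
nonnegative integer solutions of `Ax ≥ a`. -/
theorem stmt_3 (m n : ℕ) (A : Fin m → Fin n → ℝ) (a : Fin m → ℝ)
    (hA : ∀ i j, 0 ≤ A i j) (ha : ∀ i, 0 ≤ a i) (x : Fin n → ℕ) :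
    (∀ i, a i ≤ ∑ j, A i j * (x j : ℝ)) ↔
      (∀ i, a i ≤ ∑ j, min (A i j) (a i) * (x j : ℝ)) := by
  constructor
  · intro h i
    by_cases hc : ∃ j, a i ≤ A i j ∧ 1 ≤ x j
    · obtain ⟨j, hj1, hj2⟩ := hc
      calc a i = a i * 1 := (mul_one _).symm
        _ ≤ min (A i j) (a i) * (x j : ℝ) := by
            rw [min_eq_right hj1]
            exact mul_le_mul_of_nonneg_left (by exact_mod_cast hj2) (ha i)
        _ ≤ ∑ j, min (A i j) (a i) * (x j : ℝ) := by
            apply Finset.single_le_sum (fun k _ => ?_) (Finset.mem_univ j)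
            exact mul_nonneg (le_min (hA i k) (ha i)) (by positivity)
    · push_neg at hc
      have : ∑ j, min (A i j) (a i) * (x j : ℝ) = ∑ j, A i j * (x j : ℝ) := by
        apply Finset.sum_congr rfl
        intro j _
        rcases le_or_gt (a i) (A i j) with hle | hlt
        · have : x j = 0 := Nat.lt_one_iff.mp (hc j hle)
          simp [this]
        · rw [min_eq_left hlt.le]
      rw [this]; exact h i
  · intro h i
    refine (h i).trans (Finset.sum_le_sum fun j _ => ?_)
    exact mul_le_mul_of_nonneg_right (min_le_left _ _) (by positivity)
end

section
/- KC inequalities are valid: Let A ∈ ℝ_+^{m×n}, a ∈ ℝ_+^m, d ∈ ℤ_+^n, and F ⊆ {1,…,n}. Define a_i^F = max(0, a_i − Σ_{j∈F} A_{ij}·d_j), and A^F_{ij} = min(A_{ij}, a_i^F) for j ∉ F and A^F_{ij} = 0 for j ∈ F. Then every x ∈ ℤ_+^n with Ax ≥ a and x ≤ d satisfies A^F x ≥ a^F (coordinatewise). -/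
/-- Validity of the Knapsack Cover (KC) inequalities: every integer `x` with
`Ax ≥ a` and `0 ≤ x ≤ d` satisfies `A^F x ≥ a^F`. -/
theorem stmt_6 (m n : ℕ) (A : Fin m → Fin n → ℝ) (a : Fin m → ℝ) (d : Fin n → ℕ)
    (F : Finset (Fin n)) (hA : ∀ i j, 0 ≤ A i j) (ha : ∀ i, 0 ≤ a i)
    (aF : Fin m → ℝ) (haF : ∀ i, aF i = max 0 (a i - ∑ j ∈ F, A i j * (d j : ℝ)))
    (AF : Fin m → Fin n → ℝ)
    (hAF : ∀ i j, AF i j = if j ∈ F then 0 else min (A i j) (aF i))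
    (x : Fin n → ℕ) (hcov : ∀ i, a i ≤ ∑ j, A i j * (x j : ℝ))
    (hmult : ∀ j, x j ≤ d j) :
    ∀ i, aF i ≤ ∑ j, AF i j * (x j : ℝ) := by
  intro i
  have haFnn : 0 ≤ aF i := by rw [haF]; exact le_max_left _ _
  have hAFnn : ∀ j, 0 ≤ AF i j * (x j : ℝ) := by
    intro j
    apply mul_nonneg _ (Nat.cast_nonneg _)
    rw [hAF]
    split
    · exact le_refl 0
    · exact le_min (hA i j) haFnn
  by_cases h0 : a i - ∑ j ∈ F, A i j * (d j : ℝ) ≤ 0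
  · rw [haF, max_eq_left h0]
    exact Finset.sum_nonneg fun j _ => hAFnn j
  push_neg at h0
  have hr : aF i = a i - ∑ j ∈ F, A i j * (d j : ℝ) := by
    rw [haF]; exact max_eq_right h0.le
  by_cases hex : ∃ j, j ∉ F ∧ 1 ≤ x j ∧ aF i ≤ A i j
  · obtain ⟨j, hjF, hxj, hAj⟩ := hex
    have hkey : aF i ≤ AF i j * (x j : ℝ) := by
      rw [hAF, if_neg hjF, min_eq_right hAj]
      calc aF i = aF i * 1 := (mul_one _).symm
        _ ≤ aF i * (x j : ℝ) := by
            apply mul_le_mul_of_nonneg_left _ haFnn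
            exact_mod_cast hxj
    exact hkey.trans (Finset.single_le_sum (fun j _ => hAFnn j) (Finset.mem_univ j))
  · push_neg at hex
    have heq : ∀ j ∈ Fᶜ, AF i j * (x j : ℝ) = A i j * (x j : ℝ) := by
      intro j hjF
      rw [Finset.mem_compl] at hjF
      rcases Nat.eq_zero_or_pos (x j) with h | h
      · simp [h]
      · rw [hAF, if_neg hjF, min_eq_left (hex j hjF h).le]
    have hFd : ∑ j ∈ F, A i j * (x j : ℝ) ≤ ∑ j ∈ F, A i j * (d j : ℝ) := by
      apply Finset.sum_le_sum
      intro j _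
      exact mul_le_mul_of_nonneg_left (by exact_mod_cast hmult j) (hA i j)
    have hsplit : ∑ j, AF i j * (x j : ℝ) = ∑ j ∈ Fᶜ, A i j * (x j : ℝ) := by
      rw [← Finset.sum_compl_add_sum F (fun j => AF i j * (x j : ℝ))]
      rw [Finset.sum_congr rfl heq]
      have : ∑ j ∈ F, AF i j * (x j : ℝ) = 0 := by
        apply Finset.sum_eq_zero
        intro j hj
        rw [hAF, if_pos hj, zero_mul]
      rw [this, add_zero]
    have hAsplit : ∑ j ∈ Fᶜ, A i j * (x j : ℝ)
        = ∑ j, A i j * (x j : ℝ) - ∑ j ∈ F, A i j * (x j : ℝ) := by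
      rw [← Finset.sum_compl_add_sum F (fun j => A i j * (x j : ℝ))]
      ring
    rw [hsplit, hAsplit, hr]
    linarith [hcov i]
end
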